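/- arXiv:2511.20277 — 2 statements merged into one kernel-verified Lean document; each statement's English description precedes it below -/
import Mathlib

section
/- Let v* ∈ R^d, and suppose a sequence v_t = v* + ζ_{v,t} satisfies ⟨v*, ζ_{v,t}⟩ = 0 and ‖v_T‖ ≤ min_{t ∈ [T]} ‖m_t‖ where m_t = v* + ζ_t, ⟨v*, ζ_t⟩ = 0, and the norms ‖ζ_t‖ are i.i.d. with density f(x) = (√2/(σ√π)) e^{-x²/(2σ²)} on [0,∞) for some σ > 0. Then E‖v_T - v*‖ ≤ σ√(2π)/T. -/
/-!
Both `v_T - v*` and `ζ_t` are orthogonal to `v*`, so by Pythagoras `‖v_T - v*‖ ≤ ‖ζ_t‖` for every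
`t ≤ T`, and `‖v_T - v*‖` is dominated by the minimum `M` of `T` independent half-normal variables.
The half-normal density and the exponential density `c e^{-cx}` with the same value
`c = √2 / (σ √π)` at `0` cross only once, so the half-normal tail is at most `e^{-cs}`.
Hence `P(M > s) ≤ e^{-cTs}`, and the layer-cake formula gives `E M ≤ 1 / (cT) = σ √(2π) / (2T)`.
-/

open RealInnerProductSpace MeasureTheory ProbabilityTheory Real Set

theorem norm_sub_le_of_norm_le_norm_add {F : Type*} [NormedAddCommGroup F] [InnerProductSpace ℝ F]
    {u v w : F} (hu : ⟪v, u - v⟫ = 0) (hw : ⟪v, w⟫ = 0) (h : ‖u‖ ≤ ‖v + w‖) :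
    ‖u - v‖ ≤ ‖w‖ := by
  have hu' := norm_add_sq_eq_norm_sq_add_norm_sq_real hu
  have hw' := norm_add_sq_eq_norm_sq_add_norm_sq_real hw
  rw [add_sub_cancel] at hu'
  exact (mul_self_le_mul_self_iff (norm_nonneg _) (norm_nonneg _)).2
    (by nlinarith [mul_self_le_mul_self (norm_nonneg u) h])

theorem ProbabilityTheory.iIndepFun.measure_lt_inf'_le_pow {Ω ι β : Type*} [MeasurableSpace Ω]
    {μ : Measure Ω} [LinearOrder β] [TopologicalSpace β] [OrderClosedTopology β]
    [MeasurableSpace β] [OpensMeasurableSpace β] {X : ι → Ω → β} (hX : iIndepFun X μ)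
    {S : Finset ι} (hS : S.Nonempty) {s : β} {p : ENNReal}
    (hp : ∀ i ∈ S, μ {ω | s < X i ω} ≤ p) :
    μ {ω | s < S.inf' hS fun i => X i ω} ≤ p ^ S.card := by
  have hset : {ω | s < S.inf' hS fun i => X i ω} = ⋂ i ∈ S, X i ⁻¹' Ioi s := by
    ext ω
    simp [Finset.lt_inf'_iff]
  rw [hset, hX.meas_biInter fun i _ => ⟨Ioi s, measurableSet_Ioi, rfl⟩, ← Finset.prod_const]
  exact Finset.prod_le_prod' hp

theorem Finset.measurable_inf'_apply {ι δ α : Type*} [MeasurableSpace δ] [MeasurableSpace α]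
    [SemilatticeInf α] [MeasurableInf₂ α] {s : Finset ι} (hs : s.Nonempty) {f : ι → δ → α}
    (hf : ∀ i ∈ s, Measurable (f i)) : Measurable fun x => s.inf' hs fun i => f i x := by
  have h : (fun x => s.inf' hs fun i => f i x) = s.inf' hs f :=
    funext fun x => (Finset.inf'_apply hs f x).symm
  rw [h]
  exact Finset.inf'_induction hs f (fun _ hf _ hg => hf.inf hg) hf

theorem setIntegral_Ioi_le_of_single_crossing {ρ : Measure ℝ} {f g : ℝ → ℝ} {a b s : ℝ}
    (hf : IntegrableOn f (Ioi b) ρ) (hg : IntegrableOn g (Ioi b) ρ)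
    (hfg : ∫ x in Ioi b, f x ∂ρ = ∫ x in Ioi b, g x ∂ρ)
    (hle : ∀ x ∈ Ioc b a, g x ≤ f x) (hge : ∀ x ∈ Ioi a, f x ≤ g x) (hs : b ≤ s) :
    ∫ x in Ioi s, f x ∂ρ ≤ ∫ x in Ioi s, g x ∂ρ := by
  have hsub : Ioi s ⊆ Ioi b := Ioi_subset_Ioi hs
  rcases le_or_gt a s with has | hsa
  · exact setIntegral_mono_on (hf.mono_set hsub) (hg.mono_set hsub) measurableSet_Ioi
      fun x hx => hge x (lt_of_le_of_lt has hx)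
  · have hsplit : ∀ h : ℝ → ℝ, IntegrableOn h (Ioi b) ρ →
        ∫ x in Ioi b, h x ∂ρ = ∫ x in Ioc b s, h x ∂ρ + ∫ x in Ioi s, h x ∂ρ := fun h hh => by
      rw [← setIntegral_union (Ioc_disjoint_Ioi le_rfl) measurableSet_Ioi
        (hh.mono_set Ioc_subset_Ioi_self) (hh.mono_set hsub), Ioc_union_Ioi_eq_Ioi hs]
    have hhead : ∫ x in Ioc b s, g x ∂ρ ≤ ∫ x in Ioc b s, f x ∂ρ :=
      setIntegral_mono_on (hg.mono_set Ioc_subset_Ioi_self) (hf.mono_set Ioc_subset_Ioi_self)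
        measurableSet_Ioc fun x hx => hle x ⟨hx.1, hx.2.trans hsa.le⟩
    linarith [hsplit f hf, hsplit g hg]

theorem integral_Ioi_mul_exp_neg_mul {c : ℝ} (hc : 0 < c) (a : ℝ) :
    ∫ x in Ioi a, c * exp (-c * x) = exp (-c * a) := by
  rw [integral_const_mul, integral_exp_mul_Ioi (neg_lt_zero.mpr hc)]
  field_simp

theorem lintegral_ofReal_le_of_measure_lt_le_exp {Ω : Type*} [MeasurableSpace Ω] {μ : Measure Ω}
    {f : Ω → ℝ} (hf0 : 0 ≤ᵐ[μ] f) (hf : AEMeasurable f μ) {k : ℝ} (hk : 0 < k)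
    (htail : ∀ s > 0, μ {ω | s < f ω} ≤ ENNReal.ofReal (exp (-k * s))) :
    ∫⁻ ω, ENNReal.ofReal (f ω) ∂μ ≤ ENNReal.ofReal k⁻¹ :=
  calc ∫⁻ ω, ENNReal.ofReal (f ω) ∂μ = ∫⁻ s in Ioi 0, μ {ω | s < f ω} :=
        lintegral_eq_lintegral_meas_lt μ hf0 hf
    _ ≤ ∫⁻ s in Ioi 0, ENNReal.ofReal (exp (-k * s)) := setLIntegral_mono (by fun_prop) htail
    _ = ENNReal.ofReal (∫ s in Ioi 0, exp (-k * s)) :=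
        (ofReal_integral_eq_lintegral_ofReal (integrableOn_exp_mul_Ioi (neg_lt_zero.mpr hk) 0)
          (.of_forall fun _ => (exp_pos _).le)).symm
    _ = ENNReal.ofReal k⁻¹ := by
        rw [integral_exp_mul_Ioi (neg_lt_zero.mpr hk)]
        simp

theorem integral_le_of_lintegral_ofReal_le {Ω : Type*} [MeasurableSpace Ω] {μ : Measure Ω}
    {f : Ω → ℝ} (hf0 : 0 ≤ᵐ[μ] f) {b : ℝ} (hb : 0 ≤ b)
    (h : ∫⁻ ω, ENNReal.ofReal (f ω) ∂μ ≤ ENNReal.ofReal b) : ∫ ω, f ω ∂μ ≤ b := by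
  by_cases hfi : Integrable f μ
  · rw [integral_eq_lintegral_of_nonneg_ae hf0 hfi.aestronglyMeasurable]
    exact ENNReal.toReal_le_of_le_ofReal hb h
  · rwa [integral_undef hfi]

noncomputable def halfNormalPDF (σ x : ℝ) : ℝ :=
  √2 / (σ * √π) * exp (-x ^ 2 / (2 * σ ^ 2))

noncomputable def halfNormal (σ : ℝ) : Measure ℝ :=
  (volume.restrict (Ici 0)).withDensity fun x => ENNReal.ofReal (halfNormalPDF σ x)

section HalfNormal

variable {σ : ℝ}

theorem halfNormalPDF_eq (x : ℝ) :
    halfNormalPDF σ x = √2 / (σ * √π) * exp (-(2 * σ ^ 2)⁻¹ * x ^ 2) := by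
  rw [halfNormalPDF]
  congr 2
  ring

theorem integrable_halfNormalPDF (hσ : 0 < σ) : Integrable (halfNormalPDF σ) := by
  rw [funext halfNormalPDF_eq]
  exact (integrable_exp_neg_mul_sq (by positivity)).const_mul _

theorem integral_Ioi_halfNormalPDF (hσ : 0 < σ) : ∫ x in Ioi 0, halfNormalPDF σ x = 1 := by
  simp_rw [halfNormalPDF_eq]
  rw [integral_const_mul, integral_gaussian_Ioi, div_inv_eq_mul,
    sqrt_mul' _ (by positivity), sqrt_mul' _ (by positivity), sqrt_sq hσ.le]
  field_simp
  norm_num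

theorem integral_Ioi_halfNormalPDF_le (hσ : 0 < σ) {s : ℝ} (hs : 0 ≤ s) :
    ∫ x in Ioi s, halfNormalPDF σ x ≤ exp (-(√2 / (σ * √π)) * s) := by
  set c := √2 / (σ * √π)
  have hc : 0 < c := by positivity
  have hcross : ∀ x, 0 ≤ x → (c * exp (-c * x) ≤ halfNormalPDF σ x ↔ x ≤ 2 * σ ^ 2 * c) := by
    intro x hx
    rw [halfNormalPDF, mul_le_mul_iff_right₀ hc, exp_le_exp, le_div_iff₀ (by positivity)]
    constructor <;> intro h <;> nlinarith [mul_pos (pow_pos hσ 2) hc]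
  calc ∫ x in Ioi s, halfNormalPDF σ x ≤ ∫ x in Ioi s, c * exp (-c * x) :=
        setIntegral_Ioi_le_of_single_crossing (b := 0) (a := 2 * σ ^ 2 * c)
          (integrable_halfNormalPDF hσ).integrableOn
          ((integrableOn_exp_mul_Ioi (neg_lt_zero.mpr hc) 0).const_mul c)
          (by rw [integral_Ioi_halfNormalPDF hσ, integral_Ioi_mul_exp_neg_mul hc]; simp)
          (fun x hx => (hcross x hx.1.le).2 hx.2)
          (fun x hx => by
            have := (hcross x (by nlinarith [hx.out, sq_nonneg σ])).not.2 (not_le.2 hx)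
            linarith)
          hs
    _ = exp (-c * s) := integral_Ioi_mul_exp_neg_mul hc s

theorem halfNormal_Ioi_le (hσ : 0 < σ) {s : ℝ} (hs : 0 ≤ s) :
    halfNormal σ (Ioi s) ≤ ENNReal.ofReal (exp (-(√2 / (σ * √π)) * s)) := by
  have hIoi : Ioi s ∩ Ici 0 = Ioi s := inter_eq_self_of_subset_left fun x hx => hs.trans hx.out.le
  rw [halfNormal, withDensity_apply _ measurableSet_Ioi,
    Measure.restrict_restrict measurableSet_Ioi, hIoi,
    ← ofReal_integral_eq_lintegral_ofReal (integrable_halfNormalPDF hσ).integrableOn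
      (.of_forall fun x => by unfold halfNormalPDF; positivity)]
  exact ENNReal.ofReal_le_ofReal (integral_Ioi_halfNormalPDF_le hσ hs)

theorem measure_lt_le_exp_of_map_eq_halfNormal {Ω : Type*} [MeasurableSpace Ω] {μ : Measure Ω}
    {X : Ω → ℝ} (hX : Measurable X) (hlaw : μ.map X = halfNormal σ) (hσ : 0 < σ) {s : ℝ}
    (hs : 0 ≤ s) : μ {ω | s < X ω} ≤ ENNReal.ofReal (exp (-(√2 / (σ * √π)) * s)) := by
  have h := Measure.map_apply (μ := μ) hX (measurableSet_Ioi (a := s))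
  rw [hlaw] at h
  exact h.symm.trans_le (halfNormal_Ioi_le hσ hs)

end HalfNormal

theorem hidden_vector_convergence_rate {d : ℕ} {Ω : Type*} [MeasurableSpace Ω]
    (μ : Measure Ω) [IsProbabilityMeasure μ]
    (T : ℕ) (hT : 1 ≤ T) (σ : ℝ) (hσ : 0 < σ)
    (vstar : EuclideanSpace ℝ (Fin d))
    (ζ : ℕ → Ω → EuclideanSpace ℝ (Fin d))
    (vT : Ω → EuclideanSpace ℝ (Fin d))
    (hmeas : ∀ t, Measurable (ζ t))
    (horthv : ∀ ω, ⟪vstar, vT ω - vstar⟫ = 0)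
    (horthζ : ∀ t ω, ⟪vstar, ζ t ω⟫ = 0)
    (hmin : ∀ ω, ∀ t ∈ Finset.Icc 1 T, ‖vT ω‖ ≤ ‖vstar + ζ t ω‖)
    (hindep : iIndepFun (fun t ω => ‖ζ t ω‖) μ)
    (hdist : ∀ t, Measure.map (fun ω => ‖ζ t ω‖) μ =
        (volume.restrict (Set.Ici (0 : ℝ))).withDensity (fun x =>
          ENNReal.ofReal (Real.sqrt 2 / (σ * Real.sqrt Real.pi) *
            Real.exp (-x ^ 2 / (2 * σ ^ 2))))) :
    ∫ ω, ‖vT ω - vstar‖ ∂μ ≤ σ * Real.sqrt (2 * Real.pi) / T := by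
  have hlaw : ∀ t, μ.map (fun ω => ‖ζ t ω‖) = halfNormal σ := hdist
  have hne : (Finset.Icc 1 T).Nonempty := ⟨1, Finset.mem_Icc.2 ⟨le_rfl, hT⟩⟩
  set c := √2 / (σ * √π) with hc
  have hcT : 0 < c * T := by positivity
  set M : Ω → ℝ := fun ω => (Finset.Icc 1 T).inf' hne fun t => ‖ζ t ω‖
  have hM : ∀ ω, ‖vT ω - vstar‖ ≤ M ω := fun ω => Finset.le_inf' _ _ fun t ht =>
    norm_sub_le_of_norm_le_norm_add (horthv ω) (horthζ t ω) (hmin ω t ht)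
  have hM_meas : Measurable M := Finset.measurable_inf'_apply hne fun t _ => (hmeas t).norm
  have hM_tail : ∀ s > 0, μ {ω | s < M ω} ≤ ENNReal.ofReal (exp (-(c * T) * s)) := by
    intro s hs
    calc μ {ω | s < M ω} ≤ ENNReal.ofReal (exp (-c * s)) ^ (Finset.Icc 1 T).card :=
          hindep.measure_lt_inf'_le_pow hne fun t _ =>
            measure_lt_le_exp_of_map_eq_halfNormal (hmeas t).norm (hlaw t) hσ hs.le
      _ = ENNReal.ofReal (exp (-(c * T) * s)) := by
          rw [Nat.card_Icc, Nat.add_sub_cancel, ← ENNReal.ofReal_pow (exp_pos _).le,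
            ← exp_nat_mul]
          ring_nf
  have hrate : (c * T)⁻¹ ≤ σ * √(2 * π) / T := by
    rw [hc, sqrt_mul zero_le_two]
    field_simp
    nlinarith [sq_sqrt (zero_le_two (α := ℝ)), mul_pos hσ (sqrt_pos.2 pi_pos)]
  refine integral_le_of_lintegral_ofReal_le (.of_forall fun _ => norm_nonneg _) (by positivity) ?_
  calc ∫⁻ ω, ENNReal.ofReal ‖vT ω - vstar‖ ∂μ ≤ ∫⁻ ω, ENNReal.ofReal (M ω) ∂μ :=
        lintegral_mono fun ω => ENNReal.ofReal_le_ofReal (hM ω)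
    _ ≤ ENNReal.ofReal (c * T)⁻¹ := lintegral_ofReal_le_of_measure_lt_le_exp
        (.of_forall fun ω => (norm_nonneg _).trans (hM ω)) hM_meas.aemeasurable hcT hM_tail
    _ ≤ ENNReal.ofReal (σ * √(2 * π) / T) := ENNReal.ofReal_le_ofReal hrate
end

section
/- Let θ_{t+1} = θ_t − α_{1,t} A_t m_t − α_{2,t} B_t v_t with m_t = β₁ m_{t-1} + (1-β₁) g_t, m₀ = 0, α_{1,t} = α₀ t^{-k}, α_{2,t} = α₀ t^{-2k}, and define g_{h,t} = g_t + H_t where H_t = (t^{-k}/(1-β₁)) A_t^{-1} B_t v_t − ((t-1)^{-k} β₁/(1-β₁)) A_{t-1}^{-1} B_{t-1} v_{t-1} for t ≥ 2 and H₁ = (1/(1-β₁)) A₁^{-1} B₁ v₁. Then the update can be rewritten as θ_{t+1} = θ_t − α_{1,t} A_t m_{h,t} where m_{h,t} = β₁ m_{h,t-1} + (1-β₁) g_{h,t} with m_{h,0} = 0. -/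
theorem hvadam_momentum_rewrite {d : ℕ} (β₁ α₀ k : ℝ) (hβ : β₁ ∈ Set.Ico (0 : ℝ) 1)
    (hα : 0 < α₀) (hk : 0 < k)
    (A B : ℕ → Matrix (Fin d) (Fin d) ℝ) (hA : ∀ t, IsUnit (A t).det)
    (θ v g m H mh : ℕ → Fin d → ℝ)
    (hm0 : m 0 = 0)
    (hm : ∀ t, 1 ≤ t → m t = β₁ • m (t - 1) + (1 - β₁) • g t)
    (hθ : ∀ t, 1 ≤ t → θ (t + 1) = θ t - (α₀ * (t : ℝ) ^ (-k)) • (A t).mulVec (m t)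
        - (α₀ * (t : ℝ) ^ (-(2 * k))) • (B t).mulVec (v t))
    (hH1 : H 1 = (1 / (1 - β₁)) • (A 1)⁻¹.mulVec ((B 1).mulVec (v 1)))
    (hH : ∀ t, 2 ≤ t → H t =
        ((t : ℝ) ^ (-k) / (1 - β₁)) • (A t)⁻¹.mulVec ((B t).mulVec (v t))
        - (((t : ℝ) - 1) ^ (-k) * β₁ / (1 - β₁)) •
            (A (t - 1))⁻¹.mulVec ((B (t - 1)).mulVec (v (t - 1))))
    (hmh0 : mh 0 = 0)
    (hmh : ∀ t, 1 ≤ t → mh t = β₁ • mh (t - 1) + (1 - β₁) • (g t + H t)) :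
    ∀ t, 1 ≤ t → θ (t + 1) = θ t - (α₀ * (t : ℝ) ^ (-k)) • (A t).mulVec (mh t) := by
  have hβ1 : (1 : ℝ) - β₁ ≠ 0 := by have := hβ.2; linarith
  set c : ℕ → Fin d → ℝ := fun t => (A t)⁻¹.mulVec ((B t).mulVec (v t)) with hc
  have key : ∀ t, 1 ≤ t → mh t = m t + ((t : ℝ) ^ (-k)) • c t := by
    intro t ht
    induction t, ht using Nat.le_induction with
    | base =>
      rw [hmh 1 (le_refl 1), hm 1 (le_refl 1), hH1]
      simp only [Nat.sub_self, hm0, hmh0, smul_zero, zero_add, Nat.cast_one, Real.one_rpow,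
        smul_add, smul_smul]
      rw [mul_one_div, div_self hβ1, one_smul]
    | succ t ht ih =>
      have h2 : 2 ≤ t + 1 := by omega
      rw [hmh (t + 1) (by omega), hm (t + 1) (by omega), hH (t + 1) h2]
      simp only [Nat.add_sub_cancel, ih, Nat.cast_add, Nat.cast_one, add_sub_cancel_right]
      have e1 : (1 - β₁) • (((t : ℝ) + 1) ^ (-k) / (1 - β₁)) • c (t + 1)
          = ((t : ℝ) + 1) ^ (-k) • c (t + 1) := by
        rw [smul_smul, mul_div_cancel₀ _ hβ1]
      have e2 : (1 - β₁) • (((t : ℝ)) ^ (-k) * β₁ / (1 - β₁)) • c t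
          = (β₁ * (t : ℝ) ^ (-k)) • c t := by
        rw [smul_smul]
        congr 1
        field_simp
      calc β₁ • (m t + (t : ℝ) ^ (-k) • c t) +
            (1 - β₁) • (g (t + 1) + ((((t : ℝ) + 1) ^ (-k) / (1 - β₁)) • c (t + 1)
              - (((t : ℝ)) ^ (-k) * β₁ / (1 - β₁)) • c t))
          = (β₁ • m t + (1 - β₁) • g (t + 1)) + (β₁ * (t : ℝ) ^ (-k)) • c t
            + ((1 - β₁) • (((t : ℝ) + 1) ^ (-k) / (1 - β₁)) • c (t + 1)
              - (1 - β₁) • (((t : ℝ)) ^ (-k) * β₁ / (1 - β₁)) • c t) := by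
            module
        _ = β₁ • m t + (1 - β₁) • g (t + 1) + ((t : ℝ) + 1) ^ (-k) • c (t + 1) := by
            rw [e1, e2]; abel
  intro t ht
  have htpos : (0 : ℝ) < (t : ℝ) := by exact_mod_cast ht
  rw [hθ t ht, key t ht, Matrix.mulVec_add, Matrix.mulVec_smul, smul_add, smul_smul]
  have hAc : (A t).mulVec (c t) = (B t).mulVec (v t) := by
    rw [hc]
    rw [Matrix.mulVec_mulVec, Matrix.mul_nonsing_inv _ (hA t), Matrix.one_mulVec]
  rw [hAc]
  have : α₀ * (t : ℝ) ^ (-k) * (t : ℝ) ^ (-k) = α₀ * (t : ℝ) ^ (-(2 * k)) := by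
    rw [mul_assoc, ← Real.rpow_add htpos]
    ring_nf
  rw [this]
  abel
end
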